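/- Let p ≤ k be positive integers. Let X be a multiset of k vectors from {−1,1}^p with S = Σ_{v∈X} v vᵀ invertible, and suppose that for every u ∈ X and every w ∈ {−1,1}^p one has det(S − uuᵀ + wwᵀ) ≤ (π/2)·det(S). Then det(S) ≥ k^p · ((k−p+1)/k · p/(p + k(π/2 − 1)))^p. -/

import Mathlib

/-
By the matrix determinant lemma, det(S − uuᵀ + wwᵀ) / det S is a quadratic polynomial in w.
Averaging it over the 2^p sign vectors w (for which the average of wwᵀ is the identity) gives
(1 − uᵀS⁻¹u)(1 + tr S⁻¹) + uᵀS⁻²u, so local optimality bounds this quantity by π/2 for every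
u ∈ X. Summing over X, where Σ uᵀS⁻¹u = tr(S⁻¹S) = p and Σ uᵀS⁻²u = tr S⁻¹, yields
tr S⁻¹ · (k − p + 1) ≤ p + k(π/2 − 1). Finally AM–GM on the eigenvalues of S⁻¹ gives
det S ≥ (p / tr S⁻¹)^p.
-/

open Matrix

theorem Real.prod_le_sum_div_card_pow {ι : Type*} (s : Finset ι) (z : ι → ℝ)
    (hz : ∀ i ∈ s, 0 ≤ z i) : ∏ i ∈ s, z i ≤ ((∑ i ∈ s, z i) / s.card) ^ s.card := by
  rcases s.eq_empty_or_nonempty with rfl | hs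
  · simp
  have hcard : (0 : ℝ) < s.card := by exact_mod_cast hs.card_pos
  have hgm := Real.geom_mean_le_arith_mean s (fun _ => 1) z (fun _ _ => zero_le_one)
    (by simpa using hcard) hz
  simp only [Real.rpow_one, Finset.sum_const, nsmul_eq_mul, mul_one, one_mul] at hgm
  calc ∏ i ∈ s, z i = ((∏ i ∈ s, z i) ^ ((s.card : ℝ))⁻¹) ^ s.card := by
        rw [← Real.rpow_natCast, ← Real.rpow_mul (Finset.prod_nonneg hz),
          inv_mul_cancel₀ hcard.ne', Real.rpow_one]
    _ ≤ _ := by gcongr; exact Real.rpow_nonneg (Finset.prod_nonneg hz) _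

def signVector {n : Type*} (ε : n → ℤˣ) : n → ℝ := fun i => ((ε i : ℤ) : ℝ)

section SignVector

variable {n : Type*}

theorem signVector_eq_neg_one_or_one (ε : n → ℤˣ) (i : n) :
    signVector ε i = -1 ∨ signVector ε i = 1 := by
  rcases Int.units_eq_one_or (ε i) with h | h <;> simp [signVector, h]

theorem signVector_mul_self (ε : n → ℤˣ) (i : n) : signVector ε i * signVector ε i = 1 := by
  rcases signVector_eq_neg_one_or_one ε i with h | h <;> simp [h]

variable [Fintype n] [DecidableEq n]

theorem sum_signVector_mul_of_ne {i j : n} (hij : i ≠ j) :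
    ∑ ε : n → ℤˣ, signVector ε i * signVector ε j = 0 := by
  have hflip : Function.Involutive fun ε : n → ℤˣ => Function.update ε i (-ε i) :=
    fun ε => by simp
  have h := Equiv.sum_comp (hflip.toPerm _) fun ε => signVector ε i * signVector ε j
  simp only [Function.Involutive.coe_toPerm, signVector, Function.update_self,
    Function.update_of_ne hij.symm, Units.val_neg, Int.cast_neg, neg_mul,
    Finset.sum_neg_distrib] at h
  simp only [signVector]
  linarith

theorem sum_signVector_mul (i j : n) :
    ∑ ε : n → ℤˣ, signVector ε i * signVector ε j =
      if i = j then 2 ^ Fintype.card n else 0 := by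
  split_ifs with hij
  · simp [hij, signVector_mul_self, Fintype.card_units_int]
  · exact sum_signVector_mul_of_ne hij

theorem sum_signVector_dotProduct_mulVec (M : Matrix n n ℝ) :
    ∑ ε : n → ℤˣ, signVector ε ⬝ᵥ M *ᵥ signVector ε = 2 ^ Fintype.card n * M.trace := by
  have hexpand (ε : n → ℤˣ) : signVector ε ⬝ᵥ M *ᵥ signVector ε =
      ∑ i, ∑ j, M i j * (signVector ε i * signVector ε j) := by
    simp only [dotProduct, mulVec, Finset.mul_sum]
    exact Finset.sum_congr rfl fun i _ => Finset.sum_congr rfl fun j _ => by ring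
  calc ∑ ε : n → ℤˣ, signVector ε ⬝ᵥ M *ᵥ signVector ε
      = ∑ i, ∑ j, M i j * ∑ ε : n → ℤˣ, signVector ε i * signVector ε j := by
        simp only [hexpand, Finset.mul_sum]
        rw [Finset.sum_comm]
        exact Finset.sum_congr rfl fun i _ => Finset.sum_comm
    _ = 2 ^ Fintype.card n * M.trace := by
        simp [sum_signVector_mul, trace, Finset.mul_sum, mul_comm]

end SignVector

namespace Matrix

variable {n : Type*} [Fintype n]

theorem sum_dotProduct_mulVec_self {R : Type*} [CommSemiring R] (M : Matrix n n R)
    (X : Multiset (n → R)) :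
    (X.map fun u => u ⬝ᵥ M *ᵥ u).sum = trace (M * (X.map fun u => vecMulVec u u).sum) := by
  rw [← Multiset.sum_map_mul_left, trace_multiset_sum, Multiset.map_map]
  refine congrArg _ (Multiset.map_congr rfl fun u _ => ?_)
  simp only [Function.comp_apply, mul_vecMulVec, trace_vecMulVec, dotProduct_comm]

theorem posSemidef_multiset_sum_vecMulVec_self (X : Multiset (n → ℝ)) :
    (X.map fun u => vecMulVec u u).sum.PosSemidef := by
  induction X using Multiset.induction_on with
  | empty => simpa using PosSemidef.zero
  | cons a X ih =>
    rw [Multiset.map_cons, Multiset.sum_cons]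
    simpa using (posSemidef_vecMulVec_self_star a).add ih

variable [DecidableEq n]

theorem det_sub_vecMulVec_add_vecMulVec {R : Type*} [CommRing R] {S : Matrix n n R}
    (hS : IsUnit S.det) (u w : n → R) :
    (S - vecMulVec u u + vecMulVec w w).det =
      S.det * ((1 - u ⬝ᵥ S⁻¹ *ᵥ u) * (1 + w ⬝ᵥ S⁻¹ *ᵥ w) +
        (u ⬝ᵥ S⁻¹ *ᵥ w) * (w ⬝ᵥ S⁻¹ *ᵥ u)) := by
  let U : Matrix n (Fin 2) R := of fun i => ![w i, u i]
  let V : Matrix (Fin 2) n R := of ![w, -u]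
  have hUV : S - vecMulVec u u + vecMulVec w w = S + U * V := by
    ext i j
    simp only [add_apply, sub_apply, vecMulVec_apply, mul_apply, of_apply, Fin.sum_univ_two,
      cons_val_zero, cons_val_one, Pi.neg_apply, U, V]
    ring
  have hVU : V * S⁻¹ * U = !![w ⬝ᵥ S⁻¹ *ᵥ w, w ⬝ᵥ S⁻¹ *ᵥ u;
      -(u ⬝ᵥ S⁻¹ *ᵥ w), -(u ⬝ᵥ S⁻¹ *ᵥ u)] := by
    ext a b
    fin_cases a <;> fin_cases b <;>
      simp [U, V, mul_apply, dotProduct_mulVec, neg_vecMul] <;> rfl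
  rw [hUV, det_add_mul U V hS, hVU, det_fin_two]
  simp only [add_apply, one_apply_eq, one_apply_ne zero_ne_one, one_apply_ne one_ne_zero,
    of_apply, cons_val_zero, cons_val_one, cons_val_fin_one, zero_add]
  ring

theorem PosSemidef.det_le_trace_div_card_pow {A : Matrix n n ℝ} (hA : A.PosSemidef) :
    A.det ≤ (A.trace / Fintype.card n) ^ Fintype.card n := by
  rw [hA.1.det_eq_prod_eigenvalues, hA.1.trace_eq_sum_eigenvalues]
  simpa using Real.prod_le_sum_div_card_pow Finset.univ _ fun i _ => hA.eigenvalues_nonneg i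

theorem PosDef.card_div_trace_inv_pow_le_det {S : Matrix n n ℝ} (hS : S.PosDef) :
    (Fintype.card n / S⁻¹.trace) ^ Fintype.card n ≤ S.det := by
  have h := hS.inv.posSemidef.det_le_trace_div_card_pow
  rw [det_nonsing_inv, Ring.inverse_eq_inv'] at h
  simpa only [← inv_pow, inv_div] using inv_le_of_inv_le₀ hS.det_pos h

-- The mean of det(S − uuᵀ + wwᵀ) / det S over the sign vectors w (`sum_det_swap_signVector`).
noncomputable def meanSwapRatio (S : Matrix n n ℝ) (u : n → ℝ) : ℝ :=
  (1 - u ⬝ᵥ S⁻¹ *ᵥ u) * (1 + S⁻¹.trace) + u ⬝ᵥ (S⁻¹ * S⁻¹) *ᵥ u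

variable {S : Matrix n n ℝ}

theorem sum_det_swap_signVector (hS : IsUnit S.det) (u : n → ℝ) :
    ∑ ε : n → ℤˣ, (S - vecMulVec u u + vecMulVec (signVector ε) (signVector ε)).det =
      2 ^ Fintype.card n * S.det * meanSwapRatio S u := by
  let M := (1 - u ⬝ᵥ S⁻¹ *ᵥ u) • S⁻¹ + vecMulVec (S⁻¹ *ᵥ u) (u ᵥ* S⁻¹)
  have hdet (ε : n → ℤˣ) :
      (S - vecMulVec u u + vecMulVec (signVector ε) (signVector ε)).det =
        S.det * ((1 - u ⬝ᵥ S⁻¹ *ᵥ u) + signVector ε ⬝ᵥ M *ᵥ signVector ε) := by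
    rw [det_sub_vecMulVec_add_vecMulVec hS, dotProduct_mulVec u S⁻¹ (signVector ε)]
    simp only [M, add_mulVec, smul_mulVec, dotProduct_add, dotProduct_smul, vecMulVec_mulVec,
      op_smul_eq_mul, smul_eq_mul]
    ring
  have htrace : M.trace = (1 - u ⬝ᵥ S⁻¹ *ᵥ u) * S⁻¹.trace + u ⬝ᵥ (S⁻¹ * S⁻¹) *ᵥ u := by
    simp [M, trace_vecMulVec, dotProduct_comm (S⁻¹ *ᵥ u), ← dotProduct_mulVec, mulVec_mulVec]
  simp only [meanSwapRatio, hdet, ← Finset.mul_sum, Finset.sum_add_distrib,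
    sum_signVector_dotProduct_mulVec, htrace, Finset.sum_const, Finset.card_univ,
    Fintype.card_fun, Fintype.card_units_int]
  ring

theorem meanSwapRatio_le_of_forall_det_swap_le {c : ℝ} (hS : 0 < S.det) {u : n → ℝ}
    (hu : ∀ w : n → ℝ, (∀ i, w i = -1 ∨ w i = 1) →
      (S - vecMulVec u u + vecMulVec w w).det ≤ c * S.det) :
    meanSwapRatio S u ≤ c := by
  have h := Finset.sum_le_sum fun ε (_ : ε ∈ Finset.univ) =>
    hu (signVector ε) (signVector_eq_neg_one_or_one ε)
  rw [sum_det_swap_signVector hS.ne'.isUnit, Finset.sum_const, Finset.card_univ,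
    Fintype.card_fun, Fintype.card_units_int, nsmul_eq_mul, Nat.cast_pow, Nat.cast_ofNat] at h
  have hpos : (0 : ℝ) < 2 ^ Fintype.card n * S.det := by positivity
  exact le_of_mul_le_mul_left (by linarith) hpos

theorem trace_inv_mul_le_of_forall_meanSwapRatio_le {c : ℝ} {X : Multiset (n → ℝ)}
    (hS : S = (X.map fun u => vecMulVec u u).sum) (hSinv : IsUnit S.det)
    (hX : ∀ u ∈ X, meanSwapRatio S u ≤ c) :
    S⁻¹.trace * (Multiset.card X - Fintype.card n + 1) ≤
      Fintype.card n + Multiset.card X * (c - 1) := by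
  have hq : (X.map fun u => u ⬝ᵥ S⁻¹ *ᵥ u).sum = Fintype.card n := by
    rw [sum_dotProduct_mulVec_self, ← hS, nonsing_inv_mul _ hSinv, trace_one]
  have hr : (X.map fun u => u ⬝ᵥ (S⁻¹ * S⁻¹) *ᵥ u).sum = S⁻¹.trace := by
    rw [sum_dotProduct_mulVec_self, ← hS, Matrix.mul_assoc, nonsing_inv_mul _ hSinv, mul_one]
  unfold meanSwapRatio at hX
  have hsum := Multiset.sum_map_le_sum_map _ (fun _ => c) hX
  simp only [Multiset.sum_map_add, Multiset.sum_map_mul_right, Multiset.sum_map_sub, hq, hr,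
    Multiset.map_const', Multiset.sum_replicate, nsmul_eq_mul, mul_one] at hsum
  linarith

theorem card_div_pow_le_det_of_forall_det_swap_le [Nonempty n] {c : ℝ} (X : Multiset (n → ℝ))
    (hcard : Fintype.card n ≤ Multiset.card X)
    (hS : S = (X.map fun u => vecMulVec u u).sum) (hSinv : IsUnit S.det)
    (hlocal : ∀ u ∈ X, ∀ w : n → ℝ, (∀ i, w i = -1 ∨ w i = 1) →
      (S - vecMulVec u u + vecMulVec w w).det ≤ c * S.det) :
    (((Multiset.card X : ℝ) - Fintype.card n + 1) * Fintype.card n /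
        (Fintype.card n + Multiset.card X * (c - 1))) ^ Fintype.card n ≤ S.det := by
  have hPD : S.PosDef := hS ▸ (posSemidef_multiset_sum_vecMulVec_self X).posDef_iff_isUnit.mpr
    ((isUnit_iff_isUnit_det _).mpr (hS ▸ hSinv))
  have ht : 0 < S⁻¹.trace := hPD.inv.trace_pos
  have hbound := trace_inv_mul_le_of_forall_meanSwapRatio_le hS hSinv fun u hu =>
    meanSwapRatio_le_of_forall_det_swap_le hPD.det_pos (hlocal u hu)
  have hk : (0 : ℝ) < Multiset.card X - Fintype.card n + 1 := by
    have : (Fintype.card n : ℝ) ≤ Multiset.card X := by exact_mod_cast hcard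
    linarith
  have hD : 0 < (Fintype.card n : ℝ) + Multiset.card X * (c - 1) := by nlinarith
  calc _ ≤ ((Fintype.card n : ℝ) / S⁻¹.trace) ^ Fintype.card n := by
        refine pow_le_pow_left₀ (by positivity) ?_ _
        rw [div_le_div_iff₀ hD ht]
        nlinarith [Nat.cast_nonneg (α := ℝ) (Fintype.card n)]
    _ ≤ S.det := hPD.card_div_trace_inv_pow_le_det

end Matrix

theorem hypercube_local_opt_guarantee_general
    (p k : ℕ) (hp : 0 < p) (hpk : p ≤ k)
    (X : Multiset (Fin p → ℝ)) (hcard : Multiset.card X = k)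
    (S : Matrix (Fin p) (Fin p) ℝ)
    (hS : S = (X.map fun u => vecMulVec u u).sum)
    (hSinv : IsUnit S.det)
    (hlocal : ∀ u ∈ X, ∀ w : Fin p → ℝ, (∀ i, w i = -1 ∨ w i = 1) →
      (S - vecMulVec u u + vecMulVec w w).det ≤ (Real.pi / 2) * S.det) :
    S.det ≥ (k : ℝ) ^ p *
      (((k : ℝ) - p + 1) / k * (p / (p + k * (Real.pi / 2 - 1)))) ^ p := by
  have : Nonempty (Fin p) := ⟨⟨0, hp⟩⟩
  have hk : (k : ℝ) ≠ 0 := Nat.cast_ne_zero.mpr (by omega)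
  have h := card_div_pow_le_det_of_forall_det_swap_le X (by simpa [hcard]) hS hSinv hlocal
  rw [Fintype.card_fin, hcard] at h
  calc (k : ℝ) ^ p * (((k : ℝ) - p + 1) / k * (p / (p + k * (Real.pi / 2 - 1)))) ^ p
      = (((k : ℝ) - p + 1) * p / (p + k * (Real.pi / 2 - 1))) ^ p := by
        rw [← mul_pow]
        field_simp
    _ ≤ S.det := h

/-- A (π/2)-approximate local optimum over the hypercube {−1,1}^p has determinant
at least k^p · ((k−p+1)/k · p/(p + k(π/2−1)))^p. -/
theorem hypercube_local_opt_guarantee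
    (p k : ℕ) (hp : 0 < p) (hpk : p ≤ k)
    (X : Multiset (Fin p → ℝ)) (hcard : Multiset.card X = k)
    (hX : ∀ u ∈ X, ∀ i, u i = -1 ∨ u i = 1)
    (S : Matrix (Fin p) (Fin p) ℝ)
    (hS : S = (X.map fun u => vecMulVec u u).sum)
    (hSinv : IsUnit S.det)
    (hlocal : ∀ u ∈ X, ∀ w : Fin p → ℝ, (∀ i, w i = -1 ∨ w i = 1) →
      (S - vecMulVec u u + vecMulVec w w).det ≤ (Real.pi / 2) * S.det) :
    S.det ≥ (k : ℝ) ^ p *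
      (((k : ℝ) - p + 1) / k * (p / (p + k * (Real.pi / 2 - 1)))) ^ p :=
  hypercube_local_opt_guarantee_general p k hp hpk X hcard S hS hSinv hlocal
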